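/- arXiv:2602.13278 — 4 statements merged into one kernel-verified Lean document; each statement's English description precedes it below -/
import Mathlib

section
/- Let G = (V, E) be a finite graph with n vertices and m edges, set M = m + 1, and define L(β) = M·Σ_{j∈V}(|β_j|_2 + |β_j − 1|_2) + Σ_{(u,v)∈E} |β_u + β_v − 1|_2 for β : V → ℚ. If there exists a vertex k with |β_k|_2 > 1 or |β_k − 1|_2 > 1, then L(β) ≥ M·(n + 1); in particular β does not minimize L, since the all-zeros assignment achieves loss M·n + m < M·(n+1). -/
/-!
Every vertex contributes `|β_j|₂ + |β_j - 1|₂ ≥ 1`, since `1 = β_j - (β_j - 1)` and the norm is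
ultrametric. At the exceptional vertex `k` one of the two norms exceeds `1 = |1|₂`, so adding or
subtracting `1` does not change it and the contribution is `2 |β_k|₂ > 2`. Hence the vertex sum is
at least `n + 1`, and the edge terms are nonnegative. The all-zeros assignment has loss
`M n + m < M n + M`.
-/

namespace padicNorm

variable {p : ℕ} [Fact p.Prime]

theorem one_le_add_sub_one (a : ℚ) : 1 ≤ padicNorm p a + padicNorm p (a - 1) := by
  have h := padicNorm.sub (p := p) (q := a) (r := a - 1)
  rw [sub_sub_cancel, padicNorm.one] at h
  have := padicNorm.nonneg (p := p) a
  have := padicNorm.nonneg (p := p) (a - 1)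
  exact h.trans (max_le (by linarith) (by linarith))

theorem add_eq_left_of_lt {a c : ℚ} (h : padicNorm p c < padicNorm p a) :
    padicNorm p (a + c) = padicNorm p a := by
  rw [padicNorm.add_eq_max_of_ne h.ne', max_eq_left h.le]

theorem sub_one_eq_of_one_lt {a : ℚ} (h : 1 < padicNorm p a) :
    padicNorm p (a - 1) = padicNorm p a := by
  rw [sub_eq_add_neg]
  exact add_eq_left_of_lt (by rwa [padicNorm.neg, padicNorm.one])

theorem eq_of_one_lt_sub_one {a : ℚ} (h : 1 < padicNorm p (a - 1)) :
    padicNorm p a = padicNorm p (a - 1) := by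
  conv_lhs => rw [← sub_add_cancel a 1]
  exact add_eq_left_of_lt (by rwa [padicNorm.one])

theorem two_lt_add_sub_one {a : ℚ} (h : 1 < padicNorm p a ∨ 1 < padicNorm p (a - 1)) :
    2 < padicNorm p a + padicNorm p (a - 1) := by
  rcases h with h | h
  · rw [sub_one_eq_of_one_lt h]; linarith
  · rw [eq_of_one_lt_sub_one h]; linarith

end padicNorm

theorem Finset.card_add_one_le_sum {ι R : Type*} [Field R] [LinearOrder R] [IsStrictOrderedRing R]
    {s : Finset ι} {f : ι → R} (hf : ∀ i ∈ s, 1 ≤ f i) {k : ι} (hk : k ∈ s) (hfk : 2 ≤ f k) :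
    (s.card : R) + 1 ≤ ∑ i ∈ s, f i := by
  have hexcess : 1 ≤ ∑ i ∈ s, (f i - 1) :=
    (by linarith : (1 : R) ≤ f k - 1).trans
      (Finset.single_le_sum (fun i hi => sub_nonneg.2 (hf i hi)) hk)
  rw [Finset.sum_sub_distrib, Finset.sum_const, nsmul_one] at hexcess
  linarith

theorem stmt_7 (V : Type) [Fintype V] (E : Finset (V × V)) (β : V → ℚ)
    (M : ℚ) (hM : M = E.card + 1)
    (h : ∃ k : V, 1 < padicNorm 2 (β k) ∨ 1 < padicNorm 2 (β k - 1)) :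
    M * (Fintype.card V + 1) ≤
      M * ∑ j : V, (padicNorm 2 (β j) + padicNorm 2 (β j - 1)) +
        ∑ e ∈ E, padicNorm 2 (β e.1 + β e.2 - 1) ∧
    M * (Fintype.card V) + E.card < M * (Fintype.card V + 1) := by
  obtain ⟨k, hk⟩ := h
  have hM_pos : 0 < M := by rw [hM]; positivity
  have hvertex : (Fintype.card V : ℚ) + 1 ≤
      ∑ j : V, (padicNorm 2 (β j) + padicNorm 2 (β j - 1)) :=
    Finset.card_add_one_le_sum (fun j _ => padicNorm.one_le_add_sub_one (β j))
      (Finset.mem_univ k) (padicNorm.two_lt_add_sub_one hk).le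
  have hedge : 0 ≤ ∑ e ∈ E, padicNorm 2 (β e.1 + β e.2 - 1) :=
    Finset.sum_nonneg fun e _ => padicNorm.nonneg _
  constructor
  · nlinarith
  · rw [hM]; linarith
end

section
/- Let G = (V, E) be a finite graph, M > 0, and define L(β) = M·Σ_{j∈V}(|β_j|_2 + |β_j − 1|_2) + Σ_{(u,v)∈E} |β_u + β_v − 1|_2 for β : V → ℤ_2 (2-adic integers). Let s : V → {0,1} be defined by s_j = β_j mod 2. Then L(s) ≤ L(β). -/
/-! For a vertex, the rounded term |s|₂ + |s - 1|₂ is exactly 1, while ‖β‖ + ‖β - 1‖ ≥ ‖1‖ = 1 by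
the triangle inequality. For an edge, if the residues of β_u and β_v agree then β_u + β_v - 1 has
residue 1, hence is a unit and both sides equal 1; if they differ, the rounded term is |0|₂ = 0. -/

open PadicInt

theorem PadicInt.norm_eq_one_of_toZMod_ne_zero {p : ℕ} [Fact p.Prime] {x : ℤ_[p]}
    (hx : toZMod x ≠ 0) : ‖x‖ = 1 := by
  rw [← isUnit_iff, ← IsLocalRing.notMem_maximalIdeal, ← ker_toZMod]
  exact hx

lemma one_le_norm_add_norm_sub_one {R : Type*} [SeminormedRing R] [NormOneClass R] (x : R) :
    1 ≤ ‖x‖ + ‖x - 1‖ := by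
  simpa using norm_sub_le x (x - 1)

lemma padicNorm_two_val_add_padicNorm_two_val_sub_one (a : ZMod 2) :
    padicNorm 2 (a.val : ℚ) + padicNorm 2 ((a.val : ℚ) - 1) = 1 := by
  fin_cases a <;> norm_num [ZMod.val]

lemma padicNorm_two_val_add_val_sub_one_le_norm (x y : ℤ_[2]) :
    (padicNorm 2 ((toZMod x).val + (toZMod y).val - 1 : ℚ) : ℝ) ≤ ‖x + y - 1‖ := by
  obtain ⟨a, ha⟩ : ∃ a, toZMod x = a := ⟨_, rfl⟩
  obtain ⟨b, hb⟩ : ∃ b, toZMod y = b := ⟨_, rfl⟩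
  have hxy : toZMod (x + y - 1) = a + b - 1 := by simp [ha, hb]
  rw [ha, hb]
  fin_cases a <;> fin_cases b
  · rw [norm_eq_one_of_toZMod_ne_zero (by rw [hxy]; decide)]
    norm_num [ZMod.val]
  · norm_num [ZMod.val]
  · norm_num [ZMod.val]
  · rw [norm_eq_one_of_toZMod_ne_zero (by rw [hxy]; decide)]
    norm_num [ZMod.val]

theorem stmt_8 (V : Type) [Fintype V] (E : Finset (V × V)) (M : ℝ) (hM : 0 < M)
    (β : V → ℤ_[2]) (s : V → ℚ)
    (hs : ∀ j, s j = ((PadicInt.toZMod (β j)).val : ℚ)) :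
    M * ∑ j : V, (((padicNorm 2 (s j) : ℚ) : ℝ) + ((padicNorm 2 (s j - 1) : ℚ) : ℝ)) +
      ∑ e ∈ E, ((padicNorm 2 (s e.1 + s e.2 - 1) : ℚ) : ℝ) ≤
    M * ∑ j : V, (‖β j‖ + ‖β j - 1‖) +
      ∑ e ∈ E, ‖β e.1 + β e.2 - 1‖ := by
  simp only [hs]
  refine add_le_add (mul_le_mul_of_nonneg_left (Finset.sum_le_sum fun j _ => ?_) hM.le)
    (Finset.sum_le_sum fun e _ => padicNorm_two_val_add_val_sub_one_le_norm (β e.1) (β e.2))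
  rw [← Rat.cast_add, padicNorm_two_val_add_padicNorm_two_val_sub_one, Rat.cast_one]
  exact one_le_norm_add_norm_sub_one (β j)
end

section
/- Let G = (V, E) be a finite graph with n vertices and m edges, M = m + 1, and L the loss defined by L(β) = M·Σ_j(|β_j|_2 + |β_j − 1|_2) + Σ_{(u,v)∈E}|β_u + β_v − 1|_2 for β : V → ℚ. Then min over s ∈ {0,1}^V of L(s) equals M·n + m − maxcut(G), where maxcut(G) is the maximum over all 2-colorings s of the number of bichromatic edges. -/
/-! On a 0/1 assignment every vertex term `|x|_p + |x - 1|_p` equals `1`, and the edge term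
`|x + y - 1|_p` is `0` on a bichromatic edge and `|±1|_p = 1` on a monochromatic one. Hence
`L(s) = M·n + m - cut(s)` for every 2-coloring `s`, and minimizing `L` is maximizing the cut. -/

open Finset

theorem Finset.inf'_const_sub {ι α : Type*} [AddCommGroup α] [LinearOrder α]
    [IsOrderedAddMonoid α] {s : Finset ι} (H : s.Nonempty) (c : α) (f : ι → α) :
    s.inf' H (fun i => c - f i) = c - s.sup' H f := by
  refine eq_of_forall_le_iff fun b => ?_
  rw [le_inf'_iff, le_sub_comm, sup'_le_iff]
  exact forall₂_congr fun _ _ => le_sub_comm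

section ZeroOneValues

variable (p : ℕ)

theorem padicNorm_ite_add_padicNorm_ite_sub_one (a : Bool) :
    padicNorm p (if a then 1 else 0) + padicNorm p ((if a then 1 else 0) - 1) = 1 := by
  cases a <;> simp

theorem padicNorm_ite_add_ite_sub_one (a b : Bool) :
    padicNorm p ((if a then 1 else 0) + (if b then 1 else 0) - 1) = if a ≠ b then 0 else 1 := by
  cases a <;> cases b <;> norm_num [padicNorm.neg]

end ZeroOneValues

theorem sum_ite_ne_eq_card_sub_card_filter_ne {ι α R : Type*} [DecidableEq α]
    [AddCommGroupWithOne R] (E : Finset ι) (x y : ι → α) :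
    ∑ e ∈ E, (if x e ≠ y e then 0 else 1 : R) = E.card - (E.filter (fun e => x e ≠ y e)).card := by
  simp only [ne_eq, ite_not, sum_boole]
  rw [eq_sub_iff_add_eq, ← Nat.cast_add, card_filter_add_card_filter_not]

theorem stmt_10_general (V : Type) [Fintype V] [DecidableEq V] (E : Finset (V × V))
    (M : ℝ)
    (L : (V → ℚ) → ℝ)
    (hL : ∀ β, L β =
      M * ∑ j : V, (((padicNorm 2 (β j) : ℚ) : ℝ) + ((padicNorm 2 (β j - 1) : ℚ) : ℝ)) +
        ∑ e ∈ E, ((padicNorm 2 (β e.1 + β e.2 - 1) : ℚ) : ℝ)) :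
    Finset.univ.inf' Finset.univ_nonempty
        (fun s : V → Bool => L (fun j => if s j then 1 else 0)) =
      M * (Fintype.card V) + E.card -
        Finset.univ.sup' Finset.univ_nonempty
          (fun s : V → Bool => ((E.filter (fun e => s e.1 ≠ s e.2)).card : ℝ)) := by
  have loss_eq (s : V → Bool) : L (fun j => if s j then 1 else 0) =
      M * Fintype.card V + E.card - (E.filter (fun e => s e.1 ≠ s e.2)).card := by
    simp only [hL, ← Rat.cast_add, padicNorm_ite_add_padicNorm_ite_sub_one,
      padicNorm_ite_add_ite_sub_one, apply_ite Rat.cast, Rat.cast_zero, Rat.cast_one,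
      sum_ite_ne_eq_card_sub_card_filter_ne, sum_const, card_univ, nsmul_eq_mul, mul_one]
    ring
  simp only [loss_eq]
  exact inf'_const_sub _ _ _

theorem stmt_10 (V : Type) [Fintype V] [DecidableEq V] (E : Finset (V × V))
    (M : ℝ) (hM : M = E.card + 1)
    (L : (V → ℚ) → ℝ)
    (hL : ∀ β, L β =
      M * ∑ j : V, (((padicNorm 2 (β j) : ℚ) : ℝ) + ((padicNorm 2 (β j - 1) : ℚ) : ℝ)) +
        ∑ e ∈ E, ((padicNorm 2 (β e.1 + β e.2 - 1) : ℚ) : ℝ)) :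
    Finset.univ.inf' Finset.univ_nonempty
        (fun s : V → Bool => L (fun j => if s j then 1 else 0)) =
      M * (Fintype.card V) + E.card -
        Finset.univ.sup' Finset.univ_nonempty
          (fun s : V → Bool => ((E.filter (fun e => s e.1 ≠ s e.2)).card : ℝ)) :=
  stmt_10_general V E M L hL
end

section
/- Let G = (V,E) be a finite graph, and for β : V → ℚ define L(β) = (|E|+1)·Σ_j(|β_j|_2 + |β_j−1|_2) + Σ_{(u,v)∈E}|β_u+β_v−1|_2. Then any β minimizing L satisfies β_j ∈ {0,1} for all j, or there exists a binary minimizer achieving the same minimum value; in particular the minimum of L over ℚ^V is attained at some s ∈ {0,1}^V. -/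
private lemma pn_half {z : ℤ} (h : (2:ℤ) ∣ z) : padicNorm 2 z ≤ 1/2 := by
  have := (padicNorm.dvd_iff_norm_le (p := 2) (n := 1) (z := z)).1 (by simpa using h)
  simpa using this

private lemma pn_half_iff {z : ℤ} : (2:ℤ) ∣ z ↔ padicNorm 2 z ≤ 1/2 := by
  constructor
  · exact pn_half
  · intro h
    have := (padicNorm.dvd_iff_norm_le (p := 2) (n := 1) (z := z)).2 (by simpa using h)
    simpa using this

/-- parity rounding: if |x|₂ ≤ 1 then x is "even" or "odd". -/
private lemma parity {x : ℚ} (hx : padicNorm 2 x ≤ 1) :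
    padicNorm 2 x ≤ 1/2 ∨ padicNorm 2 (x - 1) ≤ 1/2 := by
  set a : ℤ := x.num with ha
  set b : ℤ := (x.den : ℤ) with hb
  have hb0 : b ≠ 0 := by rw [hb]; exact_mod_cast x.den_nz
  have hxab : x = (a : ℚ) / (b : ℚ) := by
    rw [ha, hb]; exact_mod_cast (Rat.num_div_den x).symm
  have hbodd : ¬ (2:ℤ) ∣ b := by
    intro h2b
    have h2a : ¬ (2:ℤ) ∣ a := by
      intro h2a
      have hcop := x.reduced
      have : (2:ℕ) ∣ Nat.gcd x.num.natAbs x.den := by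
        refine Nat.dvd_gcd ?_ ?_
        · exact Int.natAbs_dvd_natAbs.2 (by simpa [ha] using h2a)
        · have h2den : (2:ℕ) ∣ x.den := by
            have h2b' := h2b; rw [hb] at h2b'; exact_mod_cast h2b'
          exact h2den
      rw [hcop] at this; omega
    have hna : padicNorm 2 a = 1 := (padicNorm.int_eq_one_iff (p := 2) a).2 h2a
    have hnb : padicNorm 2 b ≤ 1/2 := pn_half h2b
    have hnb0 : 0 < padicNorm 2 b := by
      rcases lt_or_eq_of_le (padicNorm.nonneg (p := 2) (b : ℚ)) with h | h
      · exact h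
      · exact absurd (padicNorm.zero_of_padicNorm_eq_zero h.symm) (by exact_mod_cast hb0)
    have : padicNorm 2 x = padicNorm 2 a / padicNorm 2 b := by
      rw [hxab]; exact padicNorm.div _ _
    rw [this, hna, div_le_one hnb0] at hx
    linarith
  have hnb : padicNorm 2 b = 1 := (padicNorm.int_eq_one_iff (p := 2) b).2 hbodd
  by_cases h2a : (2:ℤ) ∣ a
  · left
    have : padicNorm 2 x = padicNorm 2 a / padicNorm 2 b := by
      rw [hxab]; exact padicNorm.div _ _
    rw [this, hnb, div_one]
    exact pn_half h2a
  · right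
    have hx1 : x - 1 = ((a - b : ℤ) : ℚ) / (b : ℚ) := by
      push_cast
      rw [hxab]
      field_simp
    have hdvd : (2:ℤ) ∣ (a - b) := by omega
    have : padicNorm 2 (x - 1) = padicNorm 2 ((a - b : ℤ) : ℚ) / padicNorm 2 b := by
      rw [hx1]; exact padicNorm.div _ _
    rw [this, hnb, div_one]
    exact pn_half hdvd

private lemma f_ge_one (x : ℚ) : 1 ≤ padicNorm 2 x + padicNorm 2 (x - 1) := by
  have h1 : (1:ℚ) = x - (x - 1) := by ring
  calc (1:ℚ) = padicNorm 2 (x - (x - 1)) := by rw [← h1, padicNorm.one]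
    _ ≤ max (padicNorm 2 x) (padicNorm 2 (x - 1)) := padicNorm.sub
    _ ≤ padicNorm 2 x + padicNorm 2 (x - 1) :=
        max_le_add_of_nonneg (padicNorm.nonneg _) (padicNorm.nonneg _)

private lemma add_unit {t c : ℚ} (ht : padicNorm 2 t ≤ 1/2) (hc : padicNorm 2 c = 1) :
    padicNorm 2 (t + c) = 1 := by
  have hne : padicNorm 2 t ≠ padicNorm 2 c := by rw [hc]; intro h; rw [h] at ht; linarith
  rw [padicNorm.add_eq_max_of_ne hne, hc]
  exact max_eq_right (by linarith)

theorem stmt_14 (V : Type) [Fintype V] (E : Finset (V × V))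
    (M : ℚ) (hM : M = E.card + 1)
    (L : (V → ℚ) → ℚ)
    (hL : ∀ β, L β =
      M * ∑ j : V, (padicNorm 2 (β j) + padicNorm 2 (β j - 1)) +
        ∑ e ∈ E, padicNorm 2 (β e.1 + β e.2 - 1)) :
    ∃ s : V → ℚ, (∀ j, s j = 0 ∨ s j = 1) ∧ ∀ β : V → ℚ, L s ≤ L β := by
  classical
  have hMpos : 0 < M := by rw [hM]; positivity
  -- helper facts
  have hneg1 : padicNorm 2 (-1 : ℚ) = 1 := by rw [padicNorm.neg, padicNorm.one]
  -- the finite set of binary vectors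
  set T : Finset (V → ℚ) :=
    Finset.image (fun b : V → Bool => fun j => if b j then (1:ℚ) else 0) Finset.univ with hT
  have hTne : T.Nonempty := ⟨_, Finset.mem_image.2 ⟨fun _ => false, Finset.mem_univ _, rfl⟩⟩
  have hmemT : ∀ s : V → ℚ, (∀ j, s j = 0 ∨ s j = 1) → s ∈ T := by
    intro s hs
    refine Finset.mem_image.2 ⟨fun j => if s j = 1 then true else false, Finset.mem_univ _, ?_⟩
    funext j
    rcases hs j with h | h <;> simp [h]
  obtain ⟨s₀, hs₀T, hs₀min⟩ := Finset.exists_min_image T L hTne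
  obtain ⟨b₀, -, hb₀⟩ := Finset.mem_image.1 hs₀T
  refine ⟨s₀, ?_, ?_⟩
  · intro j; rw [← hb₀]; by_cases h : b₀ j <;> simp [h]
  intro β
  -- it suffices to find some binary s with L s ≤ L β
  suffices h : ∃ s : V → ℚ, (∀ j, s j = 0 ∨ s j = 1) ∧ L s ≤ L β by
    obtain ⟨s, hs, hle⟩ := h
    exact le_trans (hs₀min s (hmemT s hs)) hle
  by_cases hgood : ∀ j, padicNorm 2 (β j) ≤ 1
  · -- rounding
    set s : V → ℚ := fun j => if padicNorm 2 (β j) ≤ 1/2 then 0 else 1 with hsdef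
    have hsbin : ∀ j, s j = 0 ∨ s j = 1 := by
      intro j
      by_cases h : padicNorm 2 (β j) ≤ 1/2
      · left; simp only [hsdef]; rw [if_pos h]
      · right; simp only [hsdef]; rw [if_neg h]
    -- parities
    have hodd : ∀ j, s j = 1 → padicNorm 2 (β j - 1) ≤ 1/2 := by
      intro j hj
      by_cases h : padicNorm 2 (β j) ≤ 1/2
      · have h0 : s j = 0 := by simp only [hsdef]; rw [if_pos h]
        rw [h0] at hj; norm_num at hj
      · rcases parity (hgood j) with h' | h'
        · exact absurd h' h
        · exact h'
    have heven : ∀ j, s j = 0 → padicNorm 2 (β j) ≤ 1/2 := by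
      intro j hj
      by_cases h : padicNorm 2 (β j) ≤ 1/2
      · exact h
      · have h0 : s j = 1 := by simp only [hsdef]; rw [if_neg h]
        rw [h0] at hj; norm_num at hj
    refine ⟨s, hsbin, ?_⟩
    rw [hL, hL]
    apply add_le_add
    · apply mul_le_mul_of_nonneg_left _ (le_of_lt hMpos)
      apply Finset.sum_le_sum
      intro j _
      have h1 : padicNorm 2 (s j) + padicNorm 2 (s j - 1) = 1 := by
        rcases hsbin j with h | h <;> rw [h] <;> norm_num [padicNorm.zero, padicNorm.one, hneg1]
      rw [h1]; exact f_ge_one _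
    · apply Finset.sum_le_sum
      intro e _
      rcases hsbin e.1 with h1 | h1 <;> rcases hsbin e.2 with h2 | h2
      · -- both even
        have : padicNorm 2 (β e.1 + β e.2 - 1) = 1 := by
          have ht : padicNorm 2 (β e.1 + β e.2) ≤ 1/2 :=
            le_trans padicNorm.nonarchimedean (max_le (heven _ h1) (heven _ h2))
          have := add_unit ht hneg1
          simpa [sub_eq_add_neg] using this
        rw [h1, h2, this]
        norm_num [hneg1, sub_eq_add_neg]
      · rw [h1, h2]; norm_num [padicNorm.zero]; exact padicNorm.nonneg _
      · rw [h1, h2]; norm_num [padicNorm.zero]; exact padicNorm.nonneg _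
      · -- both odd
        have : padicNorm 2 (β e.1 + β e.2 - 1) = 1 := by
          have ht : padicNorm 2 ((β e.1 - 1) + (β e.2 - 1)) ≤ 1/2 :=
            le_trans padicNorm.nonarchimedean (max_le (hodd _ h1) (hodd _ h2))
          have := add_unit ht (padicNorm.one (p := 2))
          have heq : (β e.1 - 1) + (β e.2 - 1) + 1 = β e.1 + β e.2 - 1 := by ring
          rwa [heq] at this
        rw [h1, h2, this]; norm_num [padicNorm.one]
  · -- bad case: compare with all-zeros
    push_neg at hgood
    obtain ⟨j0, hj0⟩ := hgood
    refine ⟨fun _ => 0, fun _ => Or.inl rfl, ?_⟩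
    have hbig : 2 < padicNorm 2 (β j0) + padicNorm 2 (β j0 - 1) := by
      have h1 : 1 < padicNorm 2 (β j0) := hj0
      have hne : padicNorm 2 (β j0) ≠ padicNorm 2 (-1 : ℚ) := by rw [hneg1]; exact ne_of_gt h1
      have : padicNorm 2 (β j0 - 1) = padicNorm 2 (β j0) := by
        rw [sub_eq_add_neg, padicNorm.add_eq_max_of_ne hne, hneg1]
        exact max_eq_left (le_of_lt h1)
      rw [this]; linarith
    rw [hL, hL]
    have hLzero1 : ∑ j : V, (padicNorm 2 ((0:ℚ)) + padicNorm 2 ((0:ℚ) - 1)) =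
        (Fintype.card V : ℚ) := by
      simp [padicNorm.zero, zero_sub, hneg1]
    have hEzero : ∑ e ∈ E, padicNorm 2 ((0:ℚ) + (0:ℚ) - 1) = (E.card : ℚ) := by
      simp [hneg1]
    have hj0mem : j0 ∈ (Finset.univ : Finset V) := Finset.mem_univ _
    -- lower bound the vertex sum of β
    have hsum : (Fintype.card V : ℚ) - 1 + (padicNorm 2 (β j0) + padicNorm 2 (β j0 - 1)) ≤
        ∑ j : V, (padicNorm 2 (β j) + padicNorm 2 (β j - 1)) := by
      rw [← Finset.add_sum_erase _ _ hj0mem]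
      have hcard : ((Finset.univ.erase j0).card : ℚ) = (Fintype.card V : ℚ) - 1 := by
        have h1 : 1 ≤ Fintype.card V := Fintype.card_pos_iff.2 ⟨j0⟩
        rw [Finset.card_erase_of_mem hj0mem, Finset.card_univ, Nat.cast_sub h1, Nat.cast_one]
      have : ((Finset.univ.erase j0).card : ℚ) ≤
          ∑ j ∈ Finset.univ.erase j0, (padicNorm 2 (β j) + padicNorm 2 (β j - 1)) := by
        have h := Finset.sum_le_sum (s := Finset.univ.erase j0)
          (fun j _ => f_ge_one (β j))
        simpa using h
      linarith [hcard ▸ this]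
    have hEnonneg : (0:ℚ) ≤ ∑ e ∈ E, padicNorm 2 (β e.1 + β e.2 - 1) :=
      Finset.sum_nonneg fun e _ => padicNorm.nonneg _
    rw [hLzero1, hEzero]
    have hkey : M * ((Fintype.card V : ℚ) - 1 +
        (padicNorm 2 (β j0) + padicNorm 2 (β j0 - 1))) ≥ M * (Fintype.card V) + E.card := by
      have : M * (padicNorm 2 (β j0) + padicNorm 2 (β j0 - 1)) > 2 * M := by nlinarith
      have hME : (E.card : ℚ) = M - 1 := by rw [hM]; ring
      nlinarith
    have := mul_le_mul_of_nonneg_left hsum (le_of_lt hMpos)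
    linarith
end
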